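/- Let X be a real Banach space, let A, B : X →L[ℝ] X be bounded linear operators that commute (A ∘ B = B ∘ A), and let τ > 0. Then τ·φ₁(τ·(A+B)) − τ·φ₁(τ·A) ∘ φ₁(τ·B) = (1/τ) · ∫_{s∈[0,τ]} ∫_{σ∈[0,τ]} ∫_{ξ∈[s,σ]} exp((τ−s)·B) ∘ exp((τ−ξ)·A) ∘ A dξ dσ ds, where the inner integral over ξ from s to σ is an oriented (interval) integral. -/

import Mathlib

open MeasureTheory intervalIntegral
open scoped Nat

/-- The operator `φ_ℓ(T) = ∑_{k=0}^∞ T^k / (ℓ+k)!` (for `ℓ = 0` this is `exp T`). -/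
noncomputable def phi {X : Type*} [NormedAddCommGroup X] [NormedSpace ℝ X] [CompleteSpace X]
    (ℓ : ℕ) (T : X →L[ℝ] X) : X →L[ℝ] X :=
  ∑' k : ℕ, (((ℓ + k)! : ℝ)⁻¹) • T ^ k

/-!
The innermost integral is elementary: `∫_s^σ exp((τ-ξ)A) A dξ = exp((τ-s)A) - exp((τ-σ)A)`.
As `A` and `B` commute, `exp((τ-s)B) exp((τ-s)A) = exp((τ-s)(A+B))`, so the triple integral
collapses to `τ ∫_0^τ exp(u(A+B)) du - (∫_0^τ exp(uB) du)(∫_0^τ exp(uA) du)`. Integrating the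
exponential series term by term gives `∫_0^τ exp(uT) du = τ φ₁(τT)`, and `φ₁(τA)`, `φ₁(τB)` commute.
-/

open NormedSpace

section BanachAlgebra

variable {𝔸 : Type*} [NormedRing 𝔸] [NormedAlgebra ℝ 𝔸]

theorem integral_exp_sub_smul (a : 𝔸) (τ : ℝ) :
    ∫ u in (0:ℝ)..τ, exp ((τ - u) • a) = ∫ u in (0:ℝ)..τ, exp (u • a) := by
  simpa using
    intervalIntegral.integral_comp_sub_left (fun u : ℝ => exp (u • a)) τ (a := 0) (b := τ)

variable [CompleteSpace 𝔸]

theorem intervalIntegral.integral_const_mul_of_intervalIntegrable {f : ℝ → 𝔸} {a b : ℝ}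
    (hf : IntervalIntegrable f volume a b) (c : 𝔸) :
    ∫ x in a..b, c * f x = c * ∫ x in a..b, f x :=
  (ContinuousLinearMap.mul ℝ 𝔸 c).intervalIntegral_comp_comm hf

theorem intervalIntegral.integral_mul_const_of_intervalIntegrable {f : ℝ → 𝔸} {a b : ℝ}
    (hf : IntervalIntegrable f volume a b) (c : 𝔸) :
    ∫ x in a..b, f x * c = (∫ x in a..b, f x) * c :=
  ((ContinuousLinearMap.mul ℝ 𝔸).flip c).intervalIntegral_comp_comm hf

@[fun_prop]
theorem Continuous.exp_smul_const {f : ℝ → ℝ} (hf : Continuous f) (a : 𝔸) :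
    Continuous fun u => exp (f u • a) :=
  (differentiable_exp_smul_const ℝ a).continuous.comp hf

theorem exp_smul_mul_exp_smul {a b : 𝔸} (hab : Commute a b) (u : ℝ) :
    exp (u • a) * exp (u • b) = exp (u • (a + b)) := by
  have mem_ball : ∀ x : 𝔸, x ∈ Metric.eball 0 (expSeries ℝ 𝔸).radius := fun x =>
    (expSeries_radius_eq_top ℝ 𝔸).symm ▸ edist_lt_top _ _
  rw [smul_add, exp_add_of_commute_of_mem_ball ((hab.smul_left u).smul_right u) (mem_ball _)
    (mem_ball _)]

theorem integral_exp_sub_smul_mul_self (a : 𝔸) (τ s σ : ℝ) :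
    ∫ ξ in s..σ, exp ((τ - ξ) • a) * a = exp ((τ - s) • a) - exp ((τ - σ) • a) := by
  have hderiv (ξ : ℝ) :
      HasDerivAt (fun x : ℝ => -exp ((τ - x) • a)) (exp ((τ - ξ) • a) * a) ξ := by
    have h := ((hasDerivAt_exp_smul_const a (τ - ξ)).scomp ξ ((hasDerivAt_id ξ).const_sub τ)).neg
    rwa [neg_one_smul, neg_neg] at h
  rw [integral_eq_sub_of_hasDerivAt (fun ξ _ => hderiv ξ)
    ((by fun_prop : Continuous fun ξ => exp ((τ - ξ) • a) * a).intervalIntegrable _ _)]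
  abel

theorem integral_integral_integral_exp_mul {a b : 𝔸} (hab : Commute a b) (τ : ℝ) :
    ∫ s in (0:ℝ)..τ, ∫ σ in (0:ℝ)..τ, ∫ ξ in s..σ, exp ((τ - s) • b) * (exp ((τ - ξ) • a) * a)
      = τ • (∫ u in (0:ℝ)..τ, exp (u • (a + b)))
        - (∫ u in (0:ℝ)..τ, exp (u • b)) * ∫ u in (0:ℝ)..τ, exp (u • a) := by
  have integrable {f : ℝ → 𝔸} (hf : Continuous f) (x y : ℝ) : IntervalIntegrable f volume x y :=
    hf.intervalIntegrable x y
  have inner (s σ : ℝ) : ∫ ξ in s..σ, exp ((τ - s) • b) * (exp ((τ - ξ) • a) * a)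
      = exp ((τ - s) • b) * (exp ((τ - s) • a) - exp ((τ - σ) • a)) := by
    rw [integral_const_mul_of_intervalIntegrable (integrable (by fun_prop) _ _),
      integral_exp_sub_smul_mul_self]
  have middle (s : ℝ) :
      ∫ σ in (0:ℝ)..τ, exp ((τ - s) • b) * (exp ((τ - s) • a) - exp ((τ - σ) • a))
        = τ • exp ((τ - s) • (a + b)) - exp ((τ - s) • b) * ∫ u in (0:ℝ)..τ, exp (u • a) := by
    rw [integral_const_mul_of_intervalIntegrable (integrable (by fun_prop) _ _),
      intervalIntegral.integral_sub intervalIntegrable_const (integrable (by fun_prop) _ _),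
      intervalIntegral.integral_const, integral_exp_sub_smul, sub_zero, mul_sub, mul_smul_comm,
      exp_smul_mul_exp_smul hab.symm, add_comm]
  simp_rw [inner, middle]
  rw [intervalIntegral.integral_sub (integrable (by fun_prop) _ _) (integrable (by fun_prop) _ _),
    intervalIntegral.integral_smul, integral_mul_const_of_intervalIntegrable
      (integrable (by fun_prop) _ _), integral_exp_sub_smul, integral_exp_sub_smul]

end BanachAlgebra

section Operator

variable {X : Type*} [NormedAddCommGroup X] [NormedSpace ℝ X] [CompleteSpace X]

theorem integral_exp_smul_eq_smul_phi_one (T : X →L[ℝ] X) (τ : ℝ) :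
    ∫ u in (0:ℝ)..τ, exp (u • T) = τ • phi 1 (τ • T) := by
  have term_bound (n : ℕ) (u : ℝ) (hu : u ∈ Set.uIoc 0 τ) :
      ‖(n !⁻¹ : ℝ) • (u • T) ^ n‖ ≤ ‖(n !⁻¹ : ℝ) • (|τ| • T) ^ n‖ := by
    have hu' : |u| ≤ |τ| := by
      simpa using Set.abs_sub_left_of_mem_uIcc (Set.uIoc_subset_uIcc hu)
    simp only [smul_pow, norm_smul, norm_pow, Real.norm_eq_abs, abs_abs]
    gcongr
  have termwise : HasSum (fun n : ℕ => ∫ u in (0:ℝ)..τ, (n !⁻¹ : ℝ) • (u • T) ^ n)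
      (∫ u in (0:ℝ)..τ, exp (u • T)) :=
    intervalIntegral.hasSum_integral_of_dominated_convergence
      (fun n _ => ‖(n !⁻¹ : ℝ) • (|τ| • T) ^ n‖)
      (fun n => (by fun_prop : Continuous fun u : ℝ => (n !⁻¹ : ℝ) • (u • T) ^ n)
        |>.aestronglyMeasurable)
      (fun n => ae_of_all _ (term_bound n))
      (ae_of_all _ fun _ _ => norm_expSeries_summable' (𝕂 := ℝ) _) intervalIntegrable_const
      (ae_of_all _ fun _ _ => exp_series_hasSum_exp' (𝕂 := ℝ) _)
  have integral_term (n : ℕ) : ∫ u in (0:ℝ)..τ, (n !⁻¹ : ℝ) • (u • T) ^ n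
      = τ • (((1 + n)! : ℝ)⁻¹ • (τ • T) ^ n) := by
    simp only [smul_pow, smul_smul, intervalIntegral.integral_smul_const,
      intervalIntegral.integral_const_mul, integral_pow]
    congr 1
    rw [add_comm 1 n, Nat.factorial_succ]
    push_cast
    field_simp
    ring
  rw [phi, ← tsum_const_smul'', ← termwise.tsum_eq]
  exact tsum_congr integral_term

theorem phi_commute {S T : X →L[ℝ] X} (h : Commute S T) (ℓ m : ℕ) :
    Commute (phi ℓ S) (phi m T) :=
  Commute.tsum_left _ fun i => Commute.tsum_right _ fun j =>
    ((h.pow_pow i j).smul_left _).smul_right _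

end Operator

theorem stmt14 {X : Type*} [NormedAddCommGroup X] [NormedSpace ℝ X] [CompleteSpace X]
    (A B : X →L[ℝ] X) (hcomm : A.comp B = B.comp A) (τ : ℝ) (hτ : 0 < τ) :
    τ • phi 1 (τ • (A + B)) - τ • (phi 1 (τ • A)).comp (phi 1 (τ • B)) =
      τ⁻¹ • ∫ s in (0:ℝ)..τ, ∫ σ in (0:ℝ)..τ, ∫ ξ in s..σ,
        (NormedSpace.exp ((τ - s) • B)).comp
          ((NormedSpace.exp ((τ - ξ) • A)).comp A) := by
  have hAB : Commute A B := hcomm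
  simp only [← ContinuousLinearMap.mul_def]
  rw [integral_integral_integral_exp_mul hAB, integral_exp_smul_eq_smul_phi_one,
    integral_exp_smul_eq_smul_phi_one, integral_exp_smul_eq_smul_phi_one,
    (phi_commute ((hAB.smul_left τ).smul_right τ) 1 1).eq, smul_mul_smul_comm]
  match_scalars <;> field_simp
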